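/- If A is an infinite superatomic Boolean algebra, then there exist Boolean homomorphisms φ_n : A → M (n ∈ ω) and φ : A → M such that (φ_n) converges pointwise to φ but does not converge uniformly. -/

import Mathlib

open MeasureTheory Set Filter Topology
open scoped symmDiff ENNReal

noncomputable section

universe u v

/-- The two-element set `{0,1}`, as an additive group (addition mod 2) with the
discrete topology. -/
inductive Two : Type
  | zero
  | one
  deriving DecidableEq

instance instFintypeTwo : Fintype Two :=
  ⟨{Two.zero, Two.one}, fun x => by cases x <;> simp⟩

instance : Zero Two := ⟨Two.zero⟩
instance : One Two := ⟨Two.one⟩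

/-- Addition modulo 2 on `{0,1}`. -/
def Two.add : Two → Two → Two
  | Two.zero, x => x
  | Two.one, Two.zero => Two.one
  | Two.one, Two.one => Two.zero

instance : Add Two := ⟨Two.add⟩
instance : Neg Two := ⟨fun x => x⟩

instance : AddCommGroup Two where
  add := (· + ·)
  zero := Two.zero
  neg := (- ·)
  add_assoc := by decide
  zero_add := by decide
  add_zero := by decide
  neg_add_cancel := by decide
  add_comm := by decide
  nsmul := nsmulRec
  zsmul := zsmulRec

instance : TopologicalSpace Two := ⊥
instance : DiscreteTopology Two := ⟨rfl⟩

instance : IsTopologicalAddGroup Two where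
  continuous_add := continuous_of_discreteTopology
  continuous_neg := continuous_of_discreteTopology

/-- The Cantor cube `{0,1}^κ`, with the product topology. -/
abbrev Cube (κ : Type u) : Type u := κ → Two

instance (κ : Type u) : MeasurableSpace (Cube κ) := borel _

instance (κ : Type u) : BorelSpace (Cube κ) := ⟨rfl⟩

/-- The fair-coin product measure `λ_κ` on `{0,1}^κ`: the Haar measure of the compact
group `{0,1}^κ`, normalized so that the whole space has measure `1`. -/
def lam (κ : Type u) : Measure (Cube κ) :=
  Measure.addHaarMeasure ⟨⟨Set.univ, isCompact_univ⟩, by simpa using Set.univ_nonempty⟩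

/-- The Boolean algebra of measurable subsets of `X`. -/
abbrev MSet (X : Type u) [MeasurableSpace X] : Type u := {s : Set X // MeasurableSet s}

/-- The ideal of `μ`-null sets in the Boolean ring of measurable subsets of `X`. -/
def nullIdeal {X : Type u} [MeasurableSpace X] (μ : Measure X) :
    Ideal (AsBoolRing (MSet X)) where
  carrier := {s | μ (ofBoolRing s : MSet X).1 = 0}
  zero_mem' := by
    show μ (ofBoolRing (0 : AsBoolRing (MSet X)) : MSet X).1 = 0
    rw [ofBoolRing_zero]
    simpa using measure_empty (μ := μ)
  add_mem' := by
    intro a b ha hb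
    show μ (ofBoolRing (a + b) : MSet X).1 = 0
    rw [ofBoolRing_add]
    refine le_antisymm ?_ zero_le
    calc μ ((ofBoolRing a ∆ ofBoolRing b : MSet X) : Set X)
        ≤ μ (((ofBoolRing a : MSet X) : Set X) ∪ ((ofBoolRing b : MSet X) : Set X)) := by
          refine measure_mono ?_
          simp only [symmDiff_def, MeasurableSet.sup_eq_union, MeasurableSet.coe_union,
            MeasurableSet.coe_sdiff]
          exact Set.union_subset_union Set.diff_subset Set.diff_subset
      _ ≤ μ ((ofBoolRing a : MSet X) : Set X) + μ ((ofBoolRing b : MSet X) : Set X) :=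
          measure_union_le _ _
      _ = 0 := by rw [ha, hb, add_zero]
  smul_mem' := by
    intro c x hx
    show μ (ofBoolRing (c * x) : MSet X).1 = 0
    rw [ofBoolRing_mul]
    refine le_antisymm ?_ zero_le
    calc μ ((ofBoolRing c ⊓ ofBoolRing x : MSet X) : Set X)
        ≤ μ ((ofBoolRing x : MSet X) : Set X) := by
          refine measure_mono ?_
          simp only [MeasurableSet.inf_eq_inter, MeasurableSet.coe_inter]
          exact Set.inter_subset_right
      _ = 0 := hx

instance {X : Type u} [MeasurableSpace X] (μ : Measure X) :
    BooleanRing (AsBoolRing (MSet X) ⧸ nullIdeal μ) where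
  isIdempotentElem a := by
    obtain ⟨x, rfl⟩ := Ideal.Quotient.mk_surjective a
    show _ * _ = _
    rw [← map_mul]
    exact congrArg _ (BooleanRing.mul_self x)

/-- The measure algebra of the measure `μ`: measurable sets modulo `μ`-null sets,
as a Boolean algebra.  For `μ = lam κ` this is the measure algebra `M_κ`. -/
abbrev MAlg (X : Type u) [MeasurableSpace X] (μ : Measure X) : Type u :=
  AsBoolAlg (AsBoolRing (MSet X) ⧸ nullIdeal μ)

/-- The class of a measurable set in the measure algebra. -/
def MAlg.mk {X : Type u} [MeasurableSpace X] (μ : Measure X) (s : MSet X) : MAlg X μ :=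
  toBoolAlg (Ideal.Quotient.mk (nullIdeal μ) (toBoolRing s))

/-- The measure induced by `μ` on its measure algebra `MAlg X μ` (with real values). -/
def mval {X : Type u} [MeasurableSpace X] (μ : Measure X) (a : MAlg X μ) : ℝ :=
  Quotient.liftOn' (ofBoolAlg a) (fun s => (μ (ofBoolRing s : MSet X).1).toReal)
    (by
      intro s t h
      have hst : s - t ∈ nullIdeal μ := by
        rwa [Submodule.quotientRel_def] at h
      have h0 : μ (((ofBoolRing s : MSet X) : Set X) ∆ ((ofBoolRing t : MSet X) : Set X)) = 0 := by
        have hn : μ ((ofBoolRing (s - t) : MSet X) : Set X) = 0 := hst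
        rw [ofBoolRing_sub] at hn
        simpa only [symmDiff_def, MeasurableSet.sup_eq_union, MeasurableSet.coe_union,
          MeasurableSet.coe_sdiff, Set.sup_eq_union] using hn
      have hc := measure_congr (μ := μ) (MeasureTheory.measure_symmDiff_eq_zero_iff.mp h0)
      simp only [hc])

/-!
The elements of `A` with only finitely many elements below them form an ideal. Superatomicity,
applied to the subalgebra generated by a binary tree of successive cuts, shows that `A` is atomic
and that some `u` is an atom modulo this ideal; then infinitely many atoms `aₙ` lie below `u`.
The principal ultrafilters at the `aₙ` converge pointwise to the ultrafilter of those `x` for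
which `u \ x` lies in the ideal, yet each differs from it at `aₙ`. Sending true to `⊤` and false
to `⊥`, these two-valued homomorphisms become homomorphisms into the measure algebra whose
distance at `aₙ` is `λ(univ) = 1`.
-/

section Atom

variable {α : Type*} [DistribLattice α] [BoundedOrder α]

theorem IsAtom.le_sup_iff {a x y : α} (ha : IsAtom a) : a ≤ x ⊔ y ↔ a ≤ x ∨ a ≤ y := by
  simp only [← ha.not_disjoint_iff_le, disjoint_sup_right, not_and_or]

def IsAtom.principalHom {a : α} (ha : IsAtom a) : BoundedLatticeHom α Prop where
  toFun x := a ≤ x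
  map_sup' _ _ := propext ha.le_sup_iff
  map_inf' _ _ := propext le_inf_iff
  map_top' := propext (iff_true_intro le_top)
  map_bot' := propext (iff_false_intro fun h => ha.ne_bot (le_bot_iff.1 h))

theorem IsAtom.finite_Iic {a : α} (ha : IsAtom a) : (Set.Iic a).Finite := by
  rw [ha.Iic_eq]
  exact (finite_singleton a).insert ⊥

theorem IsAtom.principalHom_apply {a : α} (ha : IsAtom a) (x : α) :
    ha.principalHom x = (a ≤ x) :=
  rfl

end Atom

theorem finite_Iic_sup_iff {α : Type*} [DistribLattice α] {a b : α} :
    (Iic (a ⊔ b)).Finite ↔ (Iic a).Finite ∧ (Iic b).Finite := by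
  refine ⟨fun h => ⟨h.subset ?_, h.subset ?_⟩, fun ⟨ha, hb⟩ => (ha.image2 (· ⊔ ·) hb).subset ?_⟩
  · exact Iic_subset_Iic.2 le_sup_left
  · exact Iic_subset_Iic.2 le_sup_right
  · intro z hz
    exact ⟨z ⊓ a, inf_le_right, z ⊓ b, inf_le_right,
      by simp only [← inf_sup_left, inf_eq_left.2 hz]⟩

section BooleanAlgebra

variable {A : Type*} [BooleanAlgebra A]

def IsBooleanSubalgebra (S : Set A) : Prop :=
  ⊥ ∈ S ∧ (∀ a ∈ S, aᶜ ∈ S) ∧ ∀ a ∈ S, ∀ b ∈ S, a ⊔ b ∈ S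

def Superatomic (A : Type*) [BooleanAlgebra A] : Prop :=
  ∀ S : Set A, IsBooleanSubalgebra S →
    ∃ a ∈ S, a ≠ ⊥ ∧ ∀ b ∈ S, b ≤ a → b = ⊥ ∨ b = a

/-- The binary tree of elements obtained from `⊤` by repeatedly cutting each node `z` into
`z ⊓ c z` and `z \ c z`; a list of booleans is read from its head, the last cut made. -/
def splitTree (c : A → A) : List Bool → A
  | [] => ⊤
  | true :: σ => splitTree c σ ⊓ c (splitTree c σ)
  | false :: σ => splitTree c σ \ c (splitTree c σ)

variable (c : A → A)

lemma splitTree_cons_le (b : Bool) (σ : List Bool) : splitTree c (b :: σ) ≤ splitTree c σ := by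
  cases b
  exacts [sdiff_le, inf_le_left]

lemma splitTree_true_sup_false (σ : List Bool) :
    splitTree c (true :: σ) ⊔ splitTree c (false :: σ) = splitTree c σ :=
  sup_inf_sdiff _ _

lemma disjoint_splitTree_true_false (σ : List Bool) :
    Disjoint (splitTree c (true :: σ)) (splitTree c (false :: σ)) :=
  disjoint_inf_sdiff

lemma disjoint_splitTree {σ τ : List Bool} (hlen : σ.length = τ.length) (hne : σ ≠ τ) :
    Disjoint (splitTree c σ) (splitTree c τ) := by
  induction σ generalizing τ with
  | nil => cases τ <;> simp_all
  | cons b σ ih =>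
    cases τ with
    | nil => simp at hlen
    | cons b' τ =>
      by_cases hστ : σ = τ
      · subst hστ
        cases b <;> cases b' <;> simp only [ne_eq, not_true_eq_false] at hne
        exacts [(disjoint_splitTree_true_false c σ).symm, disjoint_splitTree_true_false c σ]
      · exact (ih (by simpa using hlen) hστ).mono (splitTree_cons_le c b σ)
          (splitTree_cons_le c b' τ)

lemma disjoint_splitTree_of_forall_append {x : A} (n : ℕ) (σ : List Bool)
    (h : ∀ τ : List Bool, τ.length = n → Disjoint (splitTree c (τ ++ σ)) x) :
    Disjoint (splitTree c σ) x := by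
  induction n generalizing σ with
  | zero => simpa using h [] rfl
  | succ n ih =>
    rw [← splitTree_true_sup_false, disjoint_sup_left]
    exact ⟨ih _ fun τ hτ => by simpa using h (τ ++ [true]) (by simp [hτ]),
      ih _ fun τ hτ => by simpa using h (τ ++ [false]) (by simp [hτ])⟩

/-- Equivalently, `x` is a join of nodes of depth `n`. -/
def DecidedAtDepth (n : ℕ) (x : A) : Prop :=
  ∀ σ : List Bool, σ.length = n → splitTree c σ ≤ x ∨ Disjoint (splitTree c σ) x

variable {c}

lemma DecidedAtDepth.mono {m n : ℕ} {x : A} (hx : DecidedAtDepth c m x) (hmn : m ≤ n) :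
    DecidedAtDepth c n x := by
  induction n, hmn using Nat.le_induction with
  | base => exact hx
  | succ n _ ih =>
    rintro (_ | ⟨b, σ⟩) hσ
    · simp at hσ
    · exact (ih σ (by simpa using hσ)).imp (splitTree_cons_le c b σ).trans
        (Disjoint.mono_left (splitTree_cons_le c b σ))

lemma decidedAtDepth_splitTree (σ : List Bool) : DecidedAtDepth c σ.length (splitTree c σ) := by
  intro τ hτ
  by_cases h : τ = σ
  · exact Or.inl (h ▸ le_rfl)
  · exact Or.inr (disjoint_splitTree c hτ h)

lemma isBooleanSubalgebra_decidedAtDepth :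
    IsBooleanSubalgebra {x : A | ∃ n, DecidedAtDepth c n x} := by
  refine ⟨⟨0, fun σ _ => Or.inr disjoint_bot_right⟩, ?_, ?_⟩
  · rintro x ⟨n, hx⟩
    exact ⟨n, fun σ hσ =>
      (hx σ hσ).symm.imp Disjoint.le_compl_right disjoint_compl_right_iff.2⟩
  · rintro x ⟨m, hx⟩ y ⟨n, hy⟩
    refine ⟨max m n, fun σ hσ => ?_⟩
    rcases hx.mono (le_max_left m n) σ hσ with hσx | hσx
    · exact Or.inl (le_sup_of_le_left hσx)
    rcases hy.mono (le_max_right m n) σ hσ with hσy | hσy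
    · exact Or.inl (le_sup_of_le_right hσy)
    · exact Or.inr (disjoint_sup_right.2 ⟨hσx, hσy⟩)

/-- The elements decided at some depth form a subalgebra without atoms. -/
theorem Superatomic.false_of_splitting (hA : Superatomic A) {P : A → Prop} (htop : P ⊤)
    (hbot : ¬ P ⊥) (hsplit : ∀ z, P z → ∃ c, P (z ⊓ c) ∧ P (z \ c)) : False := by
  choose! c hc using hsplit
  have hP : ∀ σ, P (splitTree c σ) := by
    intro σ
    induction σ with
    | nil => exact htop
    | cons b σ ih => cases b; exacts [(hc _ ih).2, (hc _ ih).1]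
  have hne : ∀ σ, splitTree c σ ≠ ⊥ := fun σ h => hbot (h ▸ hP σ)
  obtain ⟨a, ⟨n, ha⟩, ha_ne, ha_atom⟩ := hA _ isBooleanSubalgebra_decidedAtDepth
  obtain ⟨σ, hσ, hσa⟩ : ∃ σ : List Bool, σ.length = n ∧ splitTree c σ ≤ a := by
    by_contra! h
    refine ha_ne (top_disjoint.1 (disjoint_splitTree_of_forall_append c n [] fun τ hτ => ?_))
    simpa using (ha τ hτ).resolve_left (h τ hτ)
  have hle : ∀ b, splitTree c (b :: σ) ≤ a := fun b => (splitTree_cons_le c b σ).trans hσa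
  rcases ha_atom _ ⟨n + 1, hσ ▸ decidedAtDepth_splitTree (true :: σ)⟩ (hle true) with h | h
  · exact hne _ h
  · exact hne _ ((disjoint_splitTree_true_false c σ).symm.eq_bot_of_le (h ▸ hle false))

theorem Superatomic.isAtomic (hA : Superatomic A) : IsAtomic A := by
  refine ⟨fun b => or_iff_not_imp_left.2 fun hb => by_contra fun hno => ?_⟩
  push Not at hno
  refine hA.false_of_splitting (P := fun z => z ⊓ b ≠ ⊥) (by simpa) (by simp) fun z hz => ?_
  obtain ⟨c, hc_ne, hc_lt⟩ : ∃ c, c ≠ ⊥ ∧ c < z ⊓ b := by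
    by_contra! h
    exact hno _ ⟨hz, fun c hc => by_contra fun hne => h c hne hc⟩ inf_le_right
  refine ⟨c, ?_, ?_⟩
  · rwa [inf_eq_right.2 (hc_lt.le.trans inf_le_left), inf_eq_left.2 (hc_lt.le.trans inf_le_right)]
  · rw [sdiff_inf_right_comm]
    exact fun h => hc_lt.not_ge (sdiff_eq_bot_iff.1 h)

theorem finite_Iic_of_finite_atoms [IsAtomic A] {u : A} (h : {a | IsAtom a ∧ a ≤ u}.Finite) :
    (Iic u).Finite := by
  refine Finite.of_finite_image (f := fun z => {a | IsAtom a ∧ a ≤ z})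
    (h.finite_subsets.subset ?_) fun z _ w _ hzw => ?_
  · rintro _ ⟨z, hz, rfl⟩ a ⟨ha, haz⟩
    exact ⟨ha, haz.trans hz⟩
  · refine BooleanAlgebra.eq_iff_atom_le_iff.2 fun a ha => ?_
    simpa [ha] using congrArg (a ∈ ·) hzw

/-- `u` represents an atom of the quotient of `A` by the ideal of elements having only finitely
many elements below them. -/
def IsAtomModFinite (u : A) : Prop :=
  (Iic u).Infinite ∧ ∀ x, (Iic (u ⊓ x)).Finite ∨ (Iic (u \ x)).Finite

theorem Superatomic.exists_isAtomModFinite [Infinite A] (hA : Superatomic A) :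
    ∃ u : A, IsAtomModFinite u := by
  by_contra! h
  refine hA.false_of_splitting (P := fun z => (Iic z).Infinite) (by simpa using infinite_univ)
    (by simp) fun z hz => ?_
  simpa [IsAtomModFinite, hz] using h z

namespace IsAtomModFinite

variable {u : A}

theorem infinite_atoms_le [IsAtomic A] (hu : IsAtomModFinite u) :
    {a | IsAtom a ∧ a ≤ u}.Infinite :=
  fun h => hu.1 (finite_Iic_of_finite_atoms h)

def ultrafilterHom (hu : IsAtomModFinite u) : BoundedLatticeHom A Prop where
  toFun x := (Iic (u \ x)).Finite
  map_sup' x y := by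
    refine propext ⟨fun h => by_contra fun hxy => hu.1 ?_, fun h => ?_⟩
    · obtain ⟨hx, hy⟩ := not_or.1 hxy
      rw [← sup_inf_sdiff u (x ⊔ y), inf_sup_left]
      exact finite_Iic_sup_iff.2 ⟨finite_Iic_sup_iff.2 ⟨(hu.2 x).resolve_right hx,
        (hu.2 y).resolve_right hy⟩, h⟩
    · rcases h with h | h
      exacts [h.subset (Iic_subset_Iic.2 (sdiff_le_sdiff_left le_sup_left)),
        h.subset (Iic_subset_Iic.2 (sdiff_le_sdiff_left le_sup_right))]
  map_inf' x y := propext <| by simp only [sdiff_inf, finite_Iic_sup_iff]; rfl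
  map_top' := by simp
  map_bot' := by simpa using hu.1

theorem ultrafilterHom_apply (hu : IsAtomModFinite u) (x : A) :
    hu.ultrafilterHom x = (Iic (u \ x)).Finite :=
  rfl

theorem not_ultrafilterHom_of_finite (hu : IsAtomModFinite u) {x : A}
    (hx : (Iic (u ⊓ x)).Finite) : ¬ hu.ultrafilterHom x := fun h =>
  hu.1 (by rw [← sup_inf_sdiff u x]; exact finite_Iic_sup_iff.2 ⟨hx, h⟩)

theorem eventually_le_iff_ultrafilterHom (hu : IsAtomModFinite u) {a : ℕ → A}
    (ha : ∀ n, IsAtom (a n)) (hau : ∀ n, a n ≤ u) (hinj : Function.Injective a) (x : A) :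
    ∀ᶠ n in atTop, (a n ≤ x ↔ hu.ultrafilterHom x) := by
  have hcofinite : ∀ s : Set A, s.Finite → ∀ᶠ n in atTop, a n ∉ s := fun s hs =>
    Nat.cofinite_eq_atTop ▸ hinj.tendsto_cofinite.eventually hs.eventually_cofinite_notMem
  rcases hu.2 x with h | h
  · filter_upwards [hcofinite _ h] with n hn
    simp only [hu.not_ultrafilterHom_of_finite h, iff_false]
    exact fun hle => hn (le_inf (hau n) hle)
  · filter_upwards [hcofinite _ h] with n hn
    simp only [hu.ultrafilterHom_apply, h, iff_true]
    exact by_contra fun hle => hn (le_sdiff.2 ⟨hau n, (ha n).not_le_iff_disjoint.1 hle⟩)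

end IsAtomModFinite

theorem Superatomic.exists_tendsto_principalHom [Infinite A] (hA : Superatomic A) :
    ∃ (a : ℕ → A) (ha : ∀ n, IsAtom (a n)) (ψ : BoundedLatticeHom A Prop),
      (∀ x, ∀ᶠ n in atTop, ((ha n).principalHom x ↔ ψ x)) ∧ ∀ n, ¬ ψ (a n) := by
  have := hA.isAtomic
  obtain ⟨u, hu⟩ := hA.exists_isAtomModFinite
  let e := hu.infinite_atoms_le.natEmbedding
  refine ⟨fun n => e n, fun n => (e n).2.1, hu.ultrafilterHom,
    hu.eventually_le_iff_ultrafilterHom (fun n => (e n).2.1) (fun n => (e n).2.2)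
      (Subtype.val_injective.comp e.injective), fun n => hu.not_ultrafilterHom_of_finite ?_⟩
  exact (e n).2.1.finite_Iic.subset (Iic_subset_Iic.2 inf_le_right)

end BooleanAlgebra

section OfProp

variable (α : Type*) [BooleanAlgebra α]

def ofPropHom : BoundedLatticeHom Prop α where
  toFun p := by classical exact if p then ⊤ else ⊥
  map_sup' p q := by by_cases p <;> by_cases q <;> simp_all
  map_inf' p q := by by_cases p <;> by_cases q <;> simp_all
  map_top' := by simp
  map_bot' := by simp

variable {α}

theorem ofPropHom_symmDiff_of_iff {p q : Prop} (h : p ↔ q) :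
    ofPropHom α p ∆ ofPropHom α q = ⊥ := by
  rw [propext h, symmDiff_self]

open Classical in
theorem ofPropHom_symmDiff_of_not_iff {p q : Prop} (h : ¬ (p ↔ q)) :
    ofPropHom α p ∆ ofPropHom α q = ⊤ := by
  show (if p then ⊤ else ⊥) ∆ (if q then ⊤ else ⊥) = ⊤
  by_cases hp : p <;> by_cases hq : q <;> simp_all

end OfProp

section MeasureAlgebra

variable {X : Type*} [MeasurableSpace X] (μ : Measure X)

theorem mval_bot : mval μ ⊥ = 0 := by
  show (μ ∅).toReal = 0
  simp

theorem mval_top [IsProbabilityMeasure μ] : mval μ ⊤ = 1 := by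
  show (μ univ).toReal = 1
  simp

instance (κ : Type*) : IsProbabilityMeasure (lam κ) := ⟨Measure.addHaarMeasure_self⟩

end MeasureAlgebra

/-- If `A` is an infinite superatomic Boolean algebra (every subalgebra contains an
atom), then there is a sequence of Boolean homomorphisms into the measure algebra `M`
converging pointwise but not uniformly. -/
theorem nontrivial_convergence_of_homomorphisms_of_superatomic
    {A : Type u} [BooleanAlgebra A] [Infinite A]
    (hsuper : ∀ S : Set A,
      (⊥ ∈ S ∧ (∀ a ∈ S, aᶜ ∈ S) ∧ ∀ a ∈ S, ∀ b ∈ S, a ⊔ b ∈ S) →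
      ∃ a ∈ S, a ≠ ⊥ ∧ ∀ b ∈ S, b ≤ a → b = ⊥ ∨ b = a) :
    ∃ (φn : ℕ → BoundedLatticeHom A (MAlg (Cube ℕ) (lam ℕ)))
      (φ : BoundedLatticeHom A (MAlg (Cube ℕ) (lam ℕ))),
      (∀ a : A, Filter.Tendsto (fun n : ℕ => mval (lam ℕ) (φn n a ∆ φ a))
        Filter.atTop (nhds (0 : ℝ))) ∧
      ¬ (∀ ε : ℝ, 0 < ε → ∃ N : ℕ, ∀ n > N, ∀ a : A,
          mval (lam ℕ) (φn n a ∆ φ a) < ε) := by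
  obtain ⟨a, ha, ψ, hconv, hψ⟩ := Superatomic.exists_tendsto_principalHom hsuper
  refine ⟨fun n => (ofPropHom _).comp (ha n).principalHom, (ofPropHom _).comp ψ,
    fun x => tendsto_const_nhds.congr' ?_, fun huniform => ?_⟩
  · filter_upwards [hconv x] with n hn
    simp [ofPropHom_symmDiff_of_iff hn, mval_bot]
  · obtain ⟨N, hN⟩ := huniform 1 one_pos
    have hne : ¬ ((ha (N + 1)).principalHom (a (N + 1)) ↔ ψ (a (N + 1))) := by
      simp [IsAtom.principalHom_apply, hψ]
    simpa [ofPropHom_symmDiff_of_not_iff hne, mval_top] using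
      hN (N + 1) (Nat.lt_succ_self N) (a (N + 1))
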